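/- arXiv:0909.0887 — 2 statements merged into one kernel-verified Lean document; each statement's English description precedes it below -/
import Mathlib

section
/- Fix a real number p with 0 < p < 1, ε with 0 < ε < 1/2, and λ with 0 < λ < 1/(1 + e·q) where q = 1/p; for each n let r = r(n) = ⌊z(n,p) − ε⌋. Then there exists N > 0 such that for all n ≥ N the following holds: if α = (a,b,c,d) ∈ D and α' = (a+1,b,c,d) ∈ D, with a ≤ r/2 and max(b,c) > (1−λ)·log_q n, then T_α > T_{α'}. -/
open Finset Filter

noncomputable section

/-- `z(n,p) = 2 log_q n − 2 log_q log_q n + 2 log_q (e/2) + 1`, where `q = 1/p`. -/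
def zf (p : ℝ) (n : ℕ) : ℝ :=
  2 * Real.logb p⁻¹ n - 2 * Real.logb p⁻¹ (Real.logb p⁻¹ n)
    + 2 * Real.logb p⁻¹ (Real.exp 1 / 2) + 1

/-- The set `D` of vectors `(a,b,c,d)` of nonnegative integers with
`a+b ≤ r`, `a+c ≤ r`, `c+d ≤ r`, `b+d ≤ r`. -/
def Dset (r : ℕ) : Finset (ℕ × ℕ × ℕ × ℕ) :=
  (Finset.range (r+1) ×ˢ Finset.range (r+1) ×ˢ Finset.range (r+1) ×ˢ Finset.range (r+1)).filter
    (fun α => α.1 + α.2.1 ≤ r ∧ α.1 + α.2.2.1 ≤ r ∧ α.2.2.1 + α.2.2.2 ≤ r ∧ α.2.1 + α.2.2.2 ≤ r)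

/-- The coefficient `F_α` for `α = (a,b,c,d)`. -/
def Fa (n r : ℕ) (α : ℕ × ℕ × ℕ × ℕ) : ℝ :=
  match α with
  | (a, b, c, d) =>
    ((r.factorial : ℝ) / ((a.factorial : ℝ) * c.factorial * (r - a - c).factorial)) *
    ((r.factorial : ℝ) / ((b.factorial : ℝ) * d.factorial * (r - b - d).factorial)) *
    (((n - 2*r).factorial : ℝ) /
      (((r - a - b).factorial : ℝ) * (r - c - d).factorial * (n - 4*r + a + b + c + d).factorial)) /
    ((n.factorial : ℝ) / ((r.factorial : ℝ) * r.factorial * (n - 2*r).factorial))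

/-- `L(α) = C(a,2) + C(b,2) + C(c,2) + C(d,2)`. -/
def La (α : ℕ × ℕ × ℕ × ℕ) : ℕ :=
  α.1.choose 2 + α.2.1.choose 2 + α.2.2.1.choose 2 + α.2.2.2.choose 2

/-- `T_α = F_α · q^{L(α)}` with `q = 1/p`. -/
def Ta (n r : ℕ) (p : ℝ) (α : ℕ × ℕ × ℕ × ℕ) : ℝ := Fa n r α * (p⁻¹) ^ (La α)

/-!
Since `T_{α'} / T_α = (r-a-b)(r-a-c) q^a / ((a+1)(n-4r+a+b+c+d+1))`, it suffices to show
`r x q^a < (a+1)(n-4r+1)` for `x = r - a - max(b,c) < r - a - (1-λ) L`, where `L = log_q n`.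
Here `r ≤ 2L` and `q^a ≤ q^{(z-ε)/2} = e q^{(1-ε)/2} n / (2L)`. If `a ≤ r/2 - δL`, the extra
factor `q^{-δL} = n^{-δ}` makes the left side `O(L n^{1-δ}) = o(n)`. Otherwise `a ≈ L` and
`x ≲ (λ+δ)L`, so the left side is at most about `λ e q^{(1-ε)/2} L n` while the right side is
about `L n`; the hypothesis `λ < 1/(1+eq)` makes the former smaller.
-/

lemma Fa_pos (n r : ℕ) (α : ℕ × ℕ × ℕ × ℕ) : 0 < Fa n r α := by
  obtain ⟨a, b, c, d⟩ := α
  have := Nat.factorial_pos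
  unfold Fa
  positivity

lemma Fa_succ_mul (n r a b c d : ℕ) (hab : a + 1 + b ≤ r) (hac : a + 1 + c ≤ r) :
    Fa n r (a + 1, b, c, d) * ((a + 1 : ℝ) * (n - 4 * r + a + b + c + d + 1 : ℕ)) =
      Fa n r (a, b, c, d) * ((r - a - c : ℕ) * (r - a - b : ℕ)) := by
  obtain ⟨u, hu, hu'⟩ : ∃ u, r - a - c = u + 1 ∧ r - (a + 1) - c = u := ⟨_, by omega, rfl⟩
  obtain ⟨v, hv, hv'⟩ : ∃ v, r - a - b = v + 1 ∧ r - (a + 1) - b = v := ⟨_, by omega, rfl⟩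
  obtain ⟨w, hw, hw'⟩ : ∃ w, n - 4 * r + a + b + c + d = w ∧
      n - 4 * r + (a + 1) + b + c + d = w + 1 := ⟨_, rfl, by omega⟩
  simp only [Fa, hu, hu', hv, hv', hw, hw']
  rw [Nat.factorial_succ a, Nat.factorial_succ u, Nat.factorial_succ v, Nat.factorial_succ w]
  have := fun m : ℕ => (Nat.factorial_pos m).ne'
  push_cast
  field_simp

lemma La_succ (a b c d : ℕ) : La (a + 1, b, c, d) = La (a, b, c, d) + a := by
  simp only [La, Nat.choose_succ_succ', Nat.choose_one_right]
  ring

lemma sub_mul_sub_le_mul_sub_max (r a b c : ℕ) :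
    (r - a - c) * (r - a - b) ≤ r * (r - a - max b c) := by
  rcases le_total b c with h | h
  · rw [max_eq_right h, mul_comm r]
    exact Nat.mul_le_mul_left _ (by omega)
  · rw [max_eq_left h]
    exact Nat.mul_le_mul_right _ (by omega)

lemma Ta_succ_lt_of (n r a b c d : ℕ) {p : ℝ} (hp : 0 < p) (hab : a + 1 + b ≤ r)
    (hac : a + 1 + c ≤ r)
    (h : ((r - a - c : ℕ) : ℝ) * (r - a - b : ℕ) * p⁻¹ ^ a
      < (a + 1 : ℝ) * (n - 4 * r + a + b + c + d + 1 : ℕ)) :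
    Ta n r p (a + 1, b, c, d) < Ta n r p (a, b, c, d) := by
  have hT : 0 < Ta n r p (a, b, c, d) := mul_pos (Fa_pos n r _) (by positivity)
  have hratio : Ta n r p (a + 1, b, c, d) * ((a + 1 : ℝ) * (n - 4 * r + a + b + c + d + 1 : ℕ)) =
      Ta n r p (a, b, c, d) * ((r - a - c : ℕ) * (r - a - b : ℕ) * p⁻¹ ^ a) := by
    simp only [Ta, La_succ, pow_add]
    linear_combination (p⁻¹ ^ La (a, b, c, d) * p⁻¹ ^ a) * Fa_succ_mul n r a b c d hab hac
  refine lt_of_mul_lt_mul_right (a := (a + 1 : ℝ) * (n - 4 * r + a + b + c + d + 1 : ℕ)) ?_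
    (by positivity)
  rw [hratio]
  exact mul_lt_mul_of_pos_left h hT

lemma Ta_succ_lt_of_mul_lt (n r a b c d : ℕ) {p : ℝ} (hp : 0 < p) (hab : a + 1 + b ≤ r)
    (hac : a + 1 + c ≤ r)
    (h : (r : ℝ) * (r - a - max b c : ℕ) * p⁻¹ ^ a < (a + 1) * (n - 4 * r + 1)) :
    Ta n r p (a + 1, b, c, d) < Ta n r p (a, b, c, d) := by
  refine Ta_succ_lt_of n r a b c d hp hab hac ?_
  have hn4r : (n : ℝ) - 4 * r ≤ (n - 4 * r : ℕ) := by
    rw [sub_le_iff_le_add]; exact_mod_cast le_tsub_add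
  calc ((r - a - c : ℕ) : ℝ) * (r - a - b : ℕ) * p⁻¹ ^ a
      ≤ r * ((r - a - max b c : ℕ) : ℝ) * p⁻¹ ^ a := by
        gcongr ?_ * _
        exact_mod_cast sub_mul_sub_le_mul_sub_max r a b c
    _ < (a + 1) * (n - 4 * r + 1) := h
    _ ≤ (a + 1) * ((n - 4 * r + a + b + c + d + 1 : ℕ) : ℝ) := by
        gcongr
        push_cast
        linarith [(Nat.cast_nonneg (a + b + c + d) : (0 : ℝ) ≤ _)]

lemma eventually_logb_le_mul_rpow {q c d : ℝ} (hq : 1 < q) (hc : 0 < c) (hd : 0 < d) :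
    ∀ᶠ x : ℝ in atTop, Real.logb q x ≤ c * x ^ d := by
  have hlq : 0 < Real.log q := Real.log_pos hq
  filter_upwards [(isLittleO_log_rpow_atTop hd).bound (mul_pos hc hlq), eventually_gt_atTop 0]
    with x hx hx0
  rw [Real.norm_of_nonneg (Real.rpow_pos_of_pos hx0 d).le] at hx
  rw [Real.logb, div_le_iff₀ hlq]
  calc Real.log x ≤ ‖Real.log x‖ := Real.le_norm_self _
    _ ≤ c * Real.log q * x ^ d := hx
    _ = c * x ^ d * Real.log q := by ring

/-- `zf p n - ε = zShape p⁻¹ (2 * logb p⁻¹ (e / 2) + 1 - ε) n`. -/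
def zShape (q C x : ℝ) : ℝ := 2 * Real.logb q x - 2 * Real.logb q (Real.logb q x) + C

lemma rpow_zShape_div_two {q : ℝ} (hq : 1 < q) (C : ℝ) {x : ℝ} (hx : 0 < x)
    (hL : 0 < Real.logb q x) :
    q ^ (zShape q C x / 2) = q ^ (C / 2) * x / Real.logb q x := by
  have hq0 : 0 < q := by linarith
  rw [show zShape q C x / 2 = Real.logb q x - Real.logb q (Real.logb q x) + C / 2 by
      unfold zShape; ring, Real.rpow_add hq0, Real.rpow_sub hq0, Real.rpow_logb hq0 hq.ne' hx,
    Real.rpow_logb hq0 hq.ne' hL]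
  ring

lemma tendsto_zShape_atTop {q : ℝ} (hq : 1 < q) (C : ℝ) :
    Tendsto (zShape q C) atTop atTop := by
  have hL := Real.tendsto_logb_atTop hq
  refine tendsto_atTop_mono' atTop ?_ (tendsto_atTop_add_const_right _ C hL)
  filter_upwards [hL.eventually (eventually_logb_le_mul_rpow hq one_half_pos one_pos)] with x hx
  rw [Real.rpow_one] at hx
  unfold zShape
  linarith

lemma mul_mul_lt_of_far {Q L n m r x y a : ℝ} (hL : 0 < L) (hn : 0 < n) (hm0 : 0 < m)
    (ha : 0 ≤ a) (hx0 : 0 ≤ x) (hxr : x ≤ r) (hr : r ≤ 2 * L) (hy0 : 0 ≤ y)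
    (hy : y * m * L ≤ Q * n) (hm : 8 * Q * L ≤ m) (hnL : 16 * L ≤ n) :
    r * x * y < (a + 1) * (n - 4 * r + 1) := by
  have hrx : r * x ≤ 4 * L ^ 2 := by nlinarith
  have hym : 4 * L ^ 2 * y * m ≤ n / 2 * m := by nlinarith
  calc r * x * y ≤ 4 * L ^ 2 * y := mul_le_mul_of_nonneg_right hrx hy0
    _ ≤ n / 2 := le_of_mul_le_mul_right hym hm0
    _ < (a + 1) * (n - 4 * r + 1) := by nlinarith

lemma mul_mul_lt_of_near {Q L n lam μ δ C r x y a : ℝ} (hQ : 0 ≤ Q) (hμ : 0 < μ)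
    (hlamQ : 2 * lam * Q = 1 - μ) (hδ : 0 ≤ δ) (hδμ : δ * (8 * Q + 8) ≤ μ)
    (hL : 0 < L) (hC : 8 * Q * |C| ≤ μ * L) (hn : 0 < n) (hnL : 32 * L ≤ μ * n)
    (ha0 : 0 ≤ a) (ha : (1 - 2 * δ) * L ≤ a + 1) (hx0 : 0 ≤ x) (hx : x ≤ (lam + δ) * L + C / 2)
    (hr : r ≤ 2 * L) (hy0 : 0 ≤ y) (hy : y * L ≤ Q * n) :
    r * x * y < (a + 1) * (n - 4 * r + 1) := by
  have hQx : 2 * Q * x ≤ (1 - 5 * μ / 8) * L := by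
    have hQC : Q * C ≤ Q * |C| := mul_le_mul_of_nonneg_left (le_abs_self C) hQ
    nlinarith [mul_le_mul_of_nonneg_left hx (by positivity : 0 ≤ 2 * Q), mul_nonneg hδ hL.le]
  have haμ : (1 - μ / 2) * L ≤ (a + 1) * (1 - μ / 4) := by
    nlinarith [mul_le_mul_of_nonneg_right ha (by nlinarith : 0 ≤ 1 - μ / 4),
      mul_nonneg (mul_nonneg hδ hμ.le) hL.le, mul_nonneg (mul_nonneg hQ hδ) hL.le]
  calc r * x * y ≤ 2 * L * x * y := by gcongr
    _ = 2 * x * (y * L) := by ring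
    _ ≤ 2 * x * (Q * n) := by gcongr
    _ = 2 * Q * x * n := by ring
    _ ≤ (1 - 5 * μ / 8) * L * n := by gcongr
    _ < (1 - μ / 2) * L * n := by nlinarith [mul_pos (mul_pos hμ hL) hn]
    _ ≤ (a + 1) * (1 - μ / 4) * n := by gcongr
    _ ≤ (a + 1) * (n - 4 * r + 1) := by nlinarith

lemma eventually_mul_mul_pow_lt {q C lam : ℝ} (hq : 1 < q) (hlam0 : 0 ≤ lam) (hlam1 : lam ≤ 1)
    (hlamQ : 2 * lam * q ^ (C / 2) < 1) :
    ∀ᶠ n : ℝ in atTop, ∀ (r x : ℝ) (a : ℕ), zShape q C n - 1 < r → r ≤ zShape q C n →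
      (a : ℝ) ≤ r / 2 → 0 ≤ x → x ≤ r - a - (1 - lam) * Real.logb q n →
      r * x * q ^ a < (a + 1) * (n - 4 * r + 1) := by
  -- `μ` is the margin left by `2λQ < 1`; `δ` is small enough that `2Qδ ≤ μ/4` and `δ ≤ μ/8`.
  set Q := q ^ (C / 2)
  set μ := 1 - 2 * lam * Q
  set δ := μ / (8 * Q + 8)
  have hq0 : 0 < q := by linarith
  have hQ : 0 < Q := by positivity
  have hμ : 0 < μ := by linarith
  have hμ1 : μ ≤ 1 := by simp only [μ]; linarith [mul_nonneg (mul_nonneg zero_le_two hlam0) hQ.le]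
  have hδ : 0 < δ := by positivity
  have hδμ : δ * (8 * Q + 8) = μ := div_mul_cancel₀ _ (by positivity)
  have hL := Real.tendsto_logb_atTop hq
  filter_upwards [eventually_gt_atTop 0, hL.eventually_ge_atTop 1,
    hL.eventually_ge_atTop ((|C| + 2) / δ), hL.eventually_ge_atTop (8 * Q * |C| / μ),
    ((Real.tendsto_logb_atTop hq).comp hL).eventually_ge_atTop (C / 2),
    hL.eventually (eventually_logb_le_mul_rpow hq (half_pos hδ) one_pos),
    eventually_logb_le_mul_rpow hq (inv_pos.2 (by positivity : 0 < 8 * Q)) hδ,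
    eventually_logb_le_mul_rpow hq (by positivity : 0 < μ / 32) one_pos]
    with n hn hL1 hLC hLQC hlogL hlogLδ hnδ hnμ
  intro r x a hr hr' ha hx0 hx
  simp only [Function.comp_apply, Real.rpow_one] at hlogL hlogLδ hnμ
  rw [le_inv_mul_iff₀ (by positivity)] at hnδ
  rw [div_le_iff₀ hδ] at hLC
  rw [div_le_iff₀ hμ] at hLQC
  set L := Real.logb q n
  have hL0 : 0 < L := by linarith
  have hs : zShape q C n = 2 * L - 2 * Real.logb q L + C := rfl
  have hsL : zShape q C n ≤ 2 * L := by linarith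
  have hqs : q ^ (zShape q C n / 2) = Q * n / L := rpow_zShape_div_two hq C hn hL0
  have hn32 : 32 * L ≤ n := by nlinarith
  by_cases hfar : (a : ℝ) ≤ r / 2 - δ * L
  · refine mul_mul_lt_of_far hL0 hn (Real.rpow_pos_of_pos hn δ) (Nat.cast_nonneg a) hx0
      (by nlinarith) (by linarith) (by positivity) ?_ hnδ (by nlinarith)
    have hnL : q ^ (δ * L) = n ^ δ := by
      rw [mul_comm, Real.rpow_mul hq0.le, Real.rpow_logb hq0 hq.ne' hn]
    rw [← Real.rpow_natCast, ← hnL, ← Real.rpow_add hq0, ← le_div_iff₀ hL0, ← hqs]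
    exact Real.rpow_le_rpow_of_exponent_le hq.le (by linarith)
  · refine mul_mul_lt_of_near (lam := lam) hQ.le hμ (by simp only [μ]; ring) hδ.le hδμ.le hL0
      (by linarith) hn (by linarith) (Nat.cast_nonneg a) (by linarith [neg_abs_le C]) hx0
      (by linarith [Real.logb_nonneg hq hL1]) (by linarith) (by positivity) ?_
    rw [← le_div_iff₀ hL0, ← hqs, ← Real.rpow_natCast]
    exact Real.rpow_le_rpow_of_exponent_le hq.le (by linarith)

lemma two_mul_rpow_half_lt_exp_mul {q ε : ℝ} (hq : 1 < q) (hε : -1 < ε) :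
    2 * q ^ ((2 * Real.logb q (Real.exp 1 / 2) + 1 - ε) / 2) < Real.exp 1 * q := by
  have hq0 : 0 < q := by linarith
  rw [show (2 * Real.logb q (Real.exp 1 / 2) + 1 - ε) / 2
      = Real.logb q (Real.exp 1 / 2) + (1 - ε) / 2 by ring,
    Real.rpow_add hq0, Real.rpow_logb hq0 hq.ne' (by positivity)]
  have : q ^ ((1 - ε) / 2) < q := by
    simpa using Real.rpow_lt_rpow_of_exponent_lt hq (by linarith : (1 - ε) / 2 < 1)
  nlinarith [Real.exp_pos 1]

theorem stmt16_general (p ε lam : ℝ) (hp0 : 0 < p) (hp1 : p < 1) (hε : 0 < ε)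
    (hlam0 : 0 < lam) (hlam1 : lam < 1 / (1 + Real.exp 1 * p⁻¹)) :
    ∃ N : ℕ, ∀ n : ℕ, N ≤ n → ∀ a b c d : ℕ,
      (a, b, c, d) ∈ Dset ⌊zf p n - ε⌋.toNat →
      (a + 1, b, c, d) ∈ Dset ⌊zf p n - ε⌋.toNat →
      (a : ℝ) ≤ (⌊zf p n - ε⌋.toNat : ℝ) / 2 →
      (1 - lam) * Real.logb p⁻¹ n < (max b c : ℝ) →
      Ta n ⌊zf p n - ε⌋.toNat p (a + 1, b, c, d) < Ta n ⌊zf p n - ε⌋.toNat p (a, b, c, d) := by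
  have hq : 1 < p⁻¹ := one_lt_inv_iff₀.mpr ⟨hp0, hp1⟩
  set C := 2 * Real.logb p⁻¹ (Real.exp 1 / 2) + 1 - ε
  rw [lt_div_iff₀ (by positivity), mul_add, mul_one] at hlam1
  have hlamQ : 2 * lam * p⁻¹ ^ (C / 2) < 1 := by
    nlinarith [two_mul_rpow_half_lt_exp_mul hq (by linarith : -1 < ε)]
  obtain ⟨N, hN⟩ := eventually_atTop.1 <| tendsto_natCast_atTop_atTop.eventually <|
    ((tendsto_zShape_atTop hq C).eventually_ge_atTop 0).and
      (eventually_mul_mul_pow_lt hq hlam0.le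
        (by nlinarith [mul_pos hlam0 (mul_pos (Real.exp_pos 1) (inv_pos.2 hp0))]) hlamQ)
  refine ⟨N, fun n hn a b c d _ hD' ha hmax => ?_⟩
  obtain ⟨hs0, hkey⟩ := hN n hn
  have hz : zf p n - ε = zShape p⁻¹ C n := by simp only [zf, zShape, C]; ring
  set r := ⌊zf p n - ε⌋.toNat with hr
  rw [hz, Int.floor_toNat] at hr
  have hr_le : (r : ℝ) ≤ zShape p⁻¹ C n := hr ▸ Nat.floor_le hs0
  have hr_gt : zShape p⁻¹ C n - 1 < r := by
    linarith [hr ▸ Nat.lt_floor_add_one (zShape p⁻¹ C n)]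
  simp only [Dset, Finset.mem_filter] at hD'
  obtain ⟨-, hab, hac, -, -⟩ := hD'
  have hmax_le : a + max b c ≤ r := by omega
  refine Ta_succ_lt_of_mul_lt n r a b c d hp0 hab hac
    (hkey _ _ a hr_gt hr_le ha (Nat.cast_nonneg _) ?_)
  rw [Nat.sub_sub, Nat.cast_sub hmax_le]
  push_cast
  linarith

/-- For `r = r(n) = ⌊z(n,p) − ε⌋` there exists `N` such that for all `n ≥ N`:
if `α = (a,b,c,d) ∈ D` and `α' = (a+1,b,c,d) ∈ D`, with `a ≤ r/2` and
`max(b,c) > (1−λ)·log_q n`, then `T_α > T_{α'}`. -/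
theorem stmt16 (p ε lam : ℝ) (hp0 : 0 < p) (hp1 : p < 1) (hε : 0 < ε) (hε' : ε < 1/2)
    (hlam0 : 0 < lam) (hlam1 : lam < 1 / (1 + Real.exp 1 * p⁻¹)) :
    ∃ N : ℕ, ∀ n : ℕ, N ≤ n → ∀ a b c d : ℕ,
      (a, b, c, d) ∈ Dset ⌊zf p n - ε⌋.toNat →
      (a + 1, b, c, d) ∈ Dset ⌊zf p n - ε⌋.toNat →
      (a : ℝ) ≤ (⌊zf p n - ε⌋.toNat : ℝ) / 2 →
      (1 - lam) * Real.logb p⁻¹ n < (max b c : ℝ) →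
      Ta n ⌊zf p n - ε⌋.toNat p (a + 1, b, c, d) < Ta n ⌊zf p n - ε⌋.toNat p (a, b, c, d) :=
  stmt16_general p ε lam hp0 hp1 hε hlam0 hlam1

end
end

section
/- Fix a real number p with 0 < p < 1 and ε with 0 < ε < 1/2, set q = 1/p, and for each n let r = r(n) = ⌊z(n,p) − ε⌋. Then for all sufficiently large n the following holds: for every α = (a,0,0,d) ∈ D with 1 ≤ a ≤ r−1, one has T_α ≤ max{ T_{(1,0,0,d)}, T_{(r−1,0,0,d)} }. -/
set_option maxRecDepth 100000


open Finset Filter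

noncomputable section

lemma Ta_nonneg (n r : ℕ) (p : ℝ) (hp : 0 < p) (α : ℕ × ℕ × ℕ × ℕ) : 0 ≤ Ta n r p α := by
  obtain ⟨a, b, c, d⟩ := α
  unfold Ta Fa
  positivity

lemma step_eq (p : ℝ) (hp : p ≠ 0) (n r a d : ℕ) (ha : a + 1 ≤ r) :
    Ta n r p (a+1,0,0,d) * (((a+1 : ℕ)) : ℝ) * (((n - 4*r + a + d + 1 : ℕ)) : ℝ)
      = Ta n r p (a,0,0,d) * (((r - a : ℕ) : ℝ)^2 * (p⁻¹) ^ a) := by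
  obtain ⟨s, hs⟩ : ∃ s, r - a = s + 1 := ⟨r - a - 1, by omega⟩
  have e1 : r - (a+1) - 0 = s := by omega
  have e2 : r - a - 0 = s + 1 := by omega
  have e3 : n - 4*r + (a+1) + 0 + 0 + d = (n - 4*r + a + 0 + 0 + d) + 1 := by omega
  have e4 : n - 4*r + a + d + 1 = (n - 4*r + a + 0 + 0 + d) + 1 := by omega
  have e6 : La (a+1,0,0,d) = La (a,0,0,d) + a := by
    simp [La, Nat.choose_succ_succ]
    omega
  unfold Ta
  rw [e6, pow_add]
  simp only [Fa, e1, e2, e3, e4, hs, Nat.sub_zero]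
  rw [Nat.factorial_succ s, Nat.factorial_succ (n - 4*r + a + 0 + 0 + d),
    Nat.factorial_succ a]
  have hfac : ∀ m : ℕ, ((m.factorial : ℝ)) ≠ 0 := fun m => Nat.cast_ne_zero.mpr (Nat.factorial_ne_zero m)
  have hpi : (p : ℝ)⁻¹ ≠ 0 := inv_ne_zero hp
  push_cast
  field_simp

lemma two_mul_choose_two (m : ℕ) : 2 * m.choose 2 = m * (m - 1) := by
  cases m with
  | zero => rfl
  | succ k =>
    rw [Nat.choose_two_right, Nat.succ_sub_one, Nat.mul_div_cancel']
    rw [mul_comm]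
    exact (Nat.even_mul_succ_self k).two_dvd

lemma le_of_sq_le_sq' (x y : ℝ) (hx : 0 ≤ x) (hy : 0 ≤ y) (h : x^2 ≤ y^2) : x ≤ y := by
  have h2 := Real.sqrt_le_sqrt h
  rwa [Real.sqrt_sq hx, Real.sqrt_sq hy] at h2

lemma main_det (p : ℝ) (hp0 : 0 < p) (hp1 : p < 1) (n r d : ℕ)
    (hr3 : 3 ≤ r) (hn : 8*r ≤ n) (hd : d ≤ r)
    (hq : 4 * (r:ℝ)^6 ≤ p⁻¹ ^ (r-2)) :
    ∀ a, 1 ≤ a → a ≤ r - 1 →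
      Ta n r p (a,0,0,d) ≤ max (Ta n r p (1,0,0,d)) (Ta n r p (r-1,0,0,d)) := by
  set q : ℝ := p⁻¹ with hqdef
  have hq1 : 1 < q := (one_lt_inv₀ hp0).mpr hp1
  have hq0 : (0:ℝ) < q := lt_trans one_pos hq1
  set f : ℕ → ℝ := fun a => Ta n r p (a,0,0,d) with hf
  have hf0 : ∀ a, 0 ≤ f a := fun a => Ta_nonneg n r p hp0 _
  set M : ℝ := ((n - 4*r : ℕ) : ℝ) with hM
  have hMpos : 0 < M := by
    have : 1 ≤ n - 4*r := by omega
    rw [hM]; exact_mod_cast Nat.lt_of_lt_of_le Nat.zero_lt_one this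
  have hn2M : (n:ℝ) ≤ 2*M := by
    rw [hM]
    have : n ≤ 2*(n - 4*r) := by omega
    exact_mod_cast this
  set K : ℝ := (r:ℝ) * (n:ℝ) with hK
  have hrpos : (0:ℝ) < r := by exact_mod_cast (by omega : 0 < r)
  have hnpos : (0:ℝ) < n := by exact_mod_cast (by omega : 0 < n)
  have hKpos : 0 < K := mul_pos hrpos hnpos
  -- step inequality, upper
  have hub : ∀ a, a + 1 ≤ r → f (a+1) * M ≤ f a * ((r:ℝ)^2 * q^a) := by
    intro a ha
    have hid := step_eq p (ne_of_gt hp0) n r a d ha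
    have hA1 : M ≤ ((a+1 : ℕ) : ℝ) * ((n - 4*r + a + d + 1 : ℕ) : ℝ) := by
      rw [hM]
      have h1 : ((n - 4*r : ℕ) : ℝ) ≤ ((n - 4*r + a + d + 1 : ℕ) : ℝ) := by
        have hx : (n - 4*r : ℕ) ≤ (n - 4*r + a + d + 1 : ℕ) := by omega
        exact_mod_cast hx
      have h2 : (1:ℝ) ≤ ((a+1 : ℕ) : ℝ) := by
        have hx : 1 ≤ a + 1 := by omega
        exact_mod_cast hx
      calc ((n - 4*r : ℕ) : ℝ) ≤ ((n - 4*r + a + d + 1 : ℕ) : ℝ) := h1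
        _ = 1 * ((n - 4*r + a + d + 1 : ℕ) : ℝ) := (one_mul _).symm
        _ ≤ ((a+1 : ℕ) : ℝ) * ((n - 4*r + a + d + 1 : ℕ) : ℝ) := by
            apply mul_le_mul_of_nonneg_right h2 (by positivity)
    calc f (a+1) * M ≤ f (a+1) * (((a+1 : ℕ) : ℝ) * ((n - 4*r + a + d + 1 : ℕ) : ℝ)) :=
          mul_le_mul_of_nonneg_left hA1 (hf0 _)
      _ = f a * (((r - a : ℕ) : ℝ)^2 * q^a) := by rw [← hid]; ring
      _ ≤ f a * ((r:ℝ)^2 * q^a) := by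
          apply mul_le_mul_of_nonneg_left _ (hf0 _)
          apply mul_le_mul_of_nonneg_right _ (by positivity)
          have hx : (r - a : ℕ) ≤ r := by omega
          have hy : ((r - a : ℕ) : ℝ) ≤ (r : ℝ) := by exact_mod_cast hx
          exact pow_le_pow_left₀ (by positivity) hy 2
  -- step inequality, lower
  have hlbs : ∀ a, a + 1 ≤ r → f a * q^a ≤ f (a+1) * K := by
    intro a ha
    have hid := step_eq p (ne_of_gt hp0) n r a d ha
    have h1 : (1:ℝ) ≤ ((r - a : ℕ) : ℝ)^2 := by
      have hx : 1 ≤ (r - a : ℕ) := by omega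
      have hy : (1:ℝ) ≤ ((r - a : ℕ) : ℝ) := by exact_mod_cast hx
      nlinarith
    have hA2 : ((a+1 : ℕ) : ℝ) * ((n - 4*r + a + d + 1 : ℕ) : ℝ) ≤ K := by
      rw [hK]
      have h2n : a + 1 ≤ r := ha
      have h2 : ((a+1 : ℕ) : ℝ) ≤ (r:ℝ) := by exact_mod_cast h2n
      have h3n : (n - 4*r + a + d + 1 : ℕ) ≤ n := by omega
      have h3 : ((n - 4*r + a + d + 1 : ℕ) : ℝ) ≤ (n:ℝ) := by exact_mod_cast h3n
      exact mul_le_mul h2 h3 (by positivity) (le_of_lt hrpos)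
    calc f a * q^a = f a * (1 * q^a) := by ring
      _ ≤ f a * (((r - a : ℕ) : ℝ)^2 * q^a) := by
          apply mul_le_mul_of_nonneg_left _ (hf0 _)
          apply mul_le_mul_of_nonneg_right h1 (by positivity)
      _ = f (a+1) * (((a+1 : ℕ) : ℝ) * ((n - 4*r + a + d + 1 : ℕ) : ℝ)) := by rw [← hid]; ring
      _ ≤ f (a+1) * K := mul_le_mul_of_nonneg_left hA2 (hf0 _)
  -- cumulative 1
  have cum1 : ∀ k, 1 + k ≤ r → f (1+k) * M^k ≤ f 1 * ((r:ℝ)^2)^k * q^((1+k).choose 2) := by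
    intro k
    induction k with
    | zero => intro _; simp
    | succ k ih =>
      intro hk
      have hk' : 1 + k ≤ r := by omega
      have ihh := ih hk'
      have hstep := hub (1+k) (by omega)
      have hch : (1 + k + 1).choose 2 = (1+k).choose 2 + (1+k) := by
        rw [Nat.choose_succ_succ]
        simp [Nat.choose_one_right]
        omega
      have e : (1 + (k+1)) = 1 + k + 1 := by omega
      rw [e, hch, pow_add q]
      calc f ((1+k)+1) * M^(k+1) = (f ((1+k)+1) * M) * M^k := by ring
        _ ≤ (f (1+k) * ((r:ℝ)^2 * q^(1+k))) * M^k := by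
            apply mul_le_mul_of_nonneg_right hstep (by positivity)
        _ = (f (1+k) * M^k) * ((r:ℝ)^2 * q^(1+k)) := by ring
        _ ≤ (f 1 * ((r:ℝ)^2)^k * q^((1+k).choose 2)) * ((r:ℝ)^2 * q^(1+k)) := by
            apply mul_le_mul_of_nonneg_right ihh (by positivity)
        _ = f 1 * ((r:ℝ)^2)^(k+1) * (q^((1+k).choose 2) * q^(1+k)) := by ring
  -- cumulative 2
  have cum2 : ∀ t a, a + t = r - 1 → f a * q^((r-1).choose 2) ≤ f (r-1) * K^t * q^(a.choose 2) := by
    intro t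
    induction t with
    | zero =>
      intro a ha
      have : a = r - 1 := by omega
      subst this
      simp
    | succ t ih =>
      intro a ha
      have h1 : (a+1) + t = r - 1 := by omega
      have ihh := ih (a+1) h1
      have hstep := hlbs a (by omega)
      have hch : (a+1).choose 2 = a.choose 2 + a := by
        rw [Nat.choose_succ_succ]
        simp [Nat.choose_one_right]
        omega
      have key : f a * q^((r-1).choose 2) * q^a ≤ f (r-1) * K^(t+1) * q^(a.choose 2) * q^a := by
        calc f a * q^((r-1).choose 2) * q^a = (f a * q^a) * q^((r-1).choose 2) := by ring
          _ ≤ (f (a+1) * K) * q^((r-1).choose 2) := by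
              apply mul_le_mul_of_nonneg_right hstep (by positivity)
          _ = (f (a+1) * q^((r-1).choose 2)) * K := by ring
          _ ≤ (f (r-1) * K^t * q^((a+1).choose 2)) * K := by
              apply mul_le_mul_of_nonneg_right ihh (le_of_lt hKpos)
          _ = f (r-1) * K^(t+1) * q^((a+1).choose 2) := by ring
          _ = f (r-1) * K^(t+1) * q^(a.choose 2) * q^a := by rw [hch, pow_add]; ring
      exact le_of_mul_le_mul_right key (pow_pos hq0 a)
  -- final assembly
  intro a ha1 ha2
  by_cases hc : q^a * (r:ℝ)^4 ≤ M^2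
  · -- compare with f 1
    obtain ⟨k, rfl⟩ : ∃ k, a = 1 + k := ⟨a - 1, by omega⟩
    have hcum := cum1 k (by omega)
    have hsq : (((r:ℝ)^2)^k * q^((1+k).choose 2))^2 ≤ (M^k)^2 := by
      have e1 : (((r:ℝ)^2)^k * q^((1+k).choose 2))^2
          = (q^(1+k) * (r:ℝ)^4)^k := by
        rw [mul_pow, pow_right_comm, ← pow_mul, ← pow_mul, mul_pow, ← pow_mul, ← pow_mul]
        rw [show 2*(2*k) = 4*k from by ring,
          show (1+k).choose 2 * 2 = (1+k)*k from by
            (rw [mul_comm, two_mul_choose_two]; congr 1; omega)]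
        ring
      rw [e1, pow_right_comm]
      exact pow_le_pow_left₀ (by positivity) hc k
    have key : ((r:ℝ)^2)^k * q^((1+k).choose 2) ≤ M^k :=
      le_of_sq_le_sq' _ _ (by positivity) (by positivity) hsq
    have h2 : f (1+k) * M^k ≤ f 1 * M^k := by
      refine le_trans hcum ?_
      rw [mul_assoc]
      exact mul_le_mul_of_nonneg_left key (hf0 1)
    have hfa : f (1+k) ≤ f 1 := le_of_mul_le_mul_right h2 (pow_pos hMpos k)
    exact le_trans hfa (le_max_left _ _)
  · -- compare with f (r-1)
    push_neg at hc
    have hK2 : K^2 ≤ q^(a + (r-2)) := by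
      have c2 : (n:ℝ)^2 ≤ (2*M)^2 := pow_le_pow_left₀ (le_of_lt hnpos) hn2M 2
      calc K^2 = (r:ℝ)^2 * (n:ℝ)^2 := by rw [hK]; ring
        _ ≤ (r:ℝ)^2 * (2*M)^2 := mul_le_mul_of_nonneg_left c2 (by positivity)
        _ = 4 * (r:ℝ)^2 * M^2 := by ring
        _ ≤ 4 * (r:ℝ)^2 * (q^a * (r:ℝ)^4) := by
            apply mul_le_mul_of_nonneg_left (le_of_lt hc) (by positivity)
        _ = 4 * (r:ℝ)^6 * q^a := by ring
        _ ≤ q^(r-2) * q^a := mul_le_mul_of_nonneg_right hq (pow_nonneg (le_of_lt hq0) a)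
        _ = q^(a + (r-2)) := by rw [← pow_add]; congr 1; omega
    obtain ⟨t, ht⟩ : ∃ t, a + t = r - 1 := ⟨r-1-a, by omega⟩
    have hcum := cum2 t a ht
    have key2 : K^t * q^(a.choose 2) ≤ q^((r-1).choose 2) := by
      apply le_of_sq_le_sq' _ _ (by positivity) (pow_nonneg (le_of_lt hq0) _)
      have e1 : (K^t * q^(a.choose 2))^2 = (K^2)^t * q^(a.choose 2 * 2) := by
        rw [mul_pow, pow_right_comm, ← pow_mul, ← pow_mul]
      have hEE : (a + (r-2)) * t + a.choose 2 * 2 = (r-1).choose 2 * 2 := by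
        obtain ⟨a', rfl⟩ : ∃ a', a = a' + 1 := ⟨a-1, by omega⟩
        have hr : r = a' + t + 2 := by omega
        subst hr
        have c1 : (a'+1).choose 2 * 2 = (a'+1)*a' := by
          rw [mul_comm, two_mul_choose_two]; congr 1
        have c2 : (a'+t+2-1).choose 2 * 2 = (a'+t+1)*(a'+t) := by
          rw [show a'+t+2-1 = a'+t+1 from by omega, mul_comm, two_mul_choose_two]
          congr 1
        rw [c1, c2, show a'+1+(a'+t+2-2) = 2*a'+t+1 from by omega]
        ring
      calc (K^t * q^(a.choose 2))^2 = (K^2)^t * q^(a.choose 2 * 2) := e1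
        _ ≤ (q^(a+(r-2)))^t * q^(a.choose 2 * 2) :=
            mul_le_mul_of_nonneg_right (pow_le_pow_left₀ (sq_nonneg K) hK2 t)
              (pow_nonneg (le_of_lt hq0) _)
        _ = q^((a+(r-2))*t + a.choose 2 * 2) := by rw [← pow_mul, ← pow_add]
        _ = q^((r-1).choose 2 * 2) := by rw [hEE]
        _ = (q^((r-1).choose 2))^2 := by rw [pow_mul]
    have h2 : f a * q^((r-1).choose 2) ≤ f (r-1) * q^((r-1).choose 2) := by
      refine le_trans hcum ?_
      rw [mul_assoc]
      exact mul_le_mul_of_nonneg_left key2 (hf0 _)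
    have hfa : f a ≤ f (r-1) := le_of_mul_le_mul_right h2 (pow_pos hq0 _)
    exact le_trans hfa (le_max_right _ _)

/-- For `r = r(n) = ⌊z(n,p) − ε⌋` and all sufficiently large `n`: for every
`α = (a,0,0,d) ∈ D` with `1 ≤ a ≤ r−1`,
`T_α ≤ max { T_{(1,0,0,d)}, T_{(r−1,0,0,d)} }`. -/
theorem stmt17 (p ε : ℝ) (hp0 : 0 < p) (hp1 : p < 1) (hε : 0 < ε) (hε' : ε < 1/2) :
    ∀ᶠ n : ℕ in atTop, ∀ a d : ℕ,
      (a, 0, 0, d) ∈ Dset ⌊zf p n - ε⌋.toNat →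
      1 ≤ a → a ≤ ⌊zf p n - ε⌋.toNat - 1 →
      Ta n ⌊zf p n - ε⌋.toNat p (a, 0, 0, d) ≤
        max (Ta n ⌊zf p n - ε⌋.toNat p (1, 0, 0, d))
          (Ta n ⌊zf p n - ε⌋.toNat p (⌊zf p n - ε⌋.toNat - 1, 0, 0, d)) := by
  have hq1 : 1 < p⁻¹ := (one_lt_inv₀ hp0).mpr hp1
  have hq0 : (0:ℝ) < p⁻¹ := lt_trans one_pos hq1
  have hlq : 0 < Real.log p⁻¹ := Real.log_pos hq1
  set C : ℝ := 2 * Real.logb p⁻¹ (Real.exp 1 / 2) + 1 with hC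
  have hCpos : 0 < C := by
    have h1 : (1:ℝ) ≤ Real.exp 1 / 2 := by
      have := Real.exp_one_gt_d9
      norm_num at this ⊢
      linarith
    have := Real.logb_nonneg hq1 h1
    positivity
  set u : ℕ → ℝ := fun n => Real.logb p⁻¹ n with hu
  have h_u : Tendsto u atTop atTop :=
    (Real.tendsto_logb_atTop hq1).comp tendsto_natCast_atTop_atTop
  have hlogsmall : ∀ c : ℝ, 0 < c → ∀ᶠ x : ℝ in atTop, Real.log x ≤ c * x := by
    intro c hc
    filter_upwards [Real.isLittleO_log_id_atTop.bound hc, eventually_ge_atTop (1:ℝ)]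
      with x hx hx1
    have h1 : Real.log x ≤ ‖Real.log x‖ := le_abs_self _
    have h2 : ‖id x‖ = x := by simp [abs_of_nonneg (by linarith : (0:ℝ) ≤ x)]
    rw [h2] at hx
    linarith
  have h_zf : Tendsto (fun n : ℕ => zf p n - ε) atTop atTop := by
    refine tendsto_atTop_mono' atTop ?_ (tendsto_atTop_add_const_right atTop (C - ε) h_u)
    filter_upwards [h_u.eventually (hlogsmall (Real.log p⁻¹ / 2) (by positivity)),
      h_u.eventually_ge_atTop 1] with n hn hn1
    have hlogb : Real.logb p⁻¹ (u n) ≤ u n / 2 := by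
      rw [Real.logb, div_le_iff₀ hlq] at *
      calc Real.log (u n) ≤ Real.log p⁻¹ / 2 * u n := hn
        _ = u n / 2 * Real.log p⁻¹ := by ring
    have he : zf p n - ε = 2 * u n - 2 * Real.logb p⁻¹ (u n) + C - ε := by
      rw [zf, hC, hu]; ring
    rw [he]
    linarith
  have h_floor : Tendsto (fun n : ℕ => ⌊zf p n - ε⌋) atTop atTop :=
    tendsto_floor_atTop.comp h_zf
  have h_r : Tendsto (fun n : ℕ => (⌊zf p n - ε⌋).toNat) atTop atTop := by
    rw [tendsto_atTop]
    intro b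
    filter_upwards [h_floor.eventually_ge_atTop (b : ℤ)] with n hn
    exact (Int.le_toNat (le_trans (Int.natCast_nonneg b) hn)).mpr hn
  -- geometric beats polynomial
  have hgeo := tendsto_pow_const_div_const_pow_of_one_lt 6 hq1
  have hev : ∀ᶠ m : ℕ in atTop, 4*(m:ℝ)^6 ≤ p⁻¹ ^ (m - 2) := by
    filter_upwards [hgeo.eventually
        (eventually_le_nhds (show (0:ℝ) < 1/(4*p⁻¹^2) by positivity)),
      eventually_ge_atTop 2] with m h1 h2
    have hqm : (0:ℝ) < p⁻¹^m := pow_pos hq0 m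
    rw [div_le_div_iff₀ hqm (by positivity), one_mul] at h1
    rw [pow_sub₀ p⁻¹ (by positivity) h2, ← div_eq_mul_inv, le_div_iff₀ (by positivity)]
    calc 4*(m:ℝ)^6 * p⁻¹^2 = (m:ℝ)^6 * (4*p⁻¹^2) := by ring
      _ ≤ p⁻¹^m := by linarith
  have F3 := h_r.eventually hev
  have F2 : ∀ᶠ n : ℕ in atTop, 8 * (⌊zf p n - ε⌋).toNat ≤ n := by
    filter_upwards [h_u.eventually_ge_atTop 1,
      (tendsto_natCast_atTop_atTop (R := ℝ)).eventually
        (hlogsmall (Real.log p⁻¹/32) (by positivity)),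
      (tendsto_natCast_atTop_atTop (R := ℝ)).eventually_ge_atTop (16*C),
      h_zf.eventually_ge_atTop 0] with n h1 h2 h3 h4
    have hun : u n ≤ (n:ℝ)/32 := by
      rw [hu]
      show Real.logb p⁻¹ n ≤ (n:ℝ)/32
      rw [Real.logb, div_le_iff₀ hlq]
      calc Real.log n ≤ Real.log p⁻¹/32 * n := h2
        _ = (n:ℝ)/32 * Real.log p⁻¹ := by ring
    have hlogbu : 0 ≤ Real.logb p⁻¹ (u n) := Real.logb_nonneg hq1 h1
    have hzub : zf p n - ε ≤ (n:ℝ)/8 := by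
      have he : zf p n - ε = 2*u n - 2*Real.logb p⁻¹ (u n) + C - ε := by
        rw [zf, hC, hu]; ring
      rw [he]
      have hc16 : C ≤ (n:ℝ)/16 := by
        rw [le_div_iff₀ (by norm_num : (0:ℝ) < 16)]
        linarith
      linarith
    have hfl : ((⌊zf p n - ε⌋).toNat : ℝ) ≤ (n:ℝ)/8 := by
      have h5 : ((⌊zf p n - ε⌋).toNat : ℤ) = ⌊zf p n - ε⌋ :=
        Int.toNat_of_nonneg (Int.floor_nonneg.mpr h4)
      have h6 : ((⌊zf p n - ε⌋).toNat : ℝ) = ((⌊zf p n - ε⌋ : ℤ) : ℝ) := by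
        exact_mod_cast congrArg (fun z : ℤ => (z : ℝ)) h5
      rw [h6]
      exact le_trans (Int.floor_le _) hzub
    have h8 : (8:ℝ) * ((⌊zf p n - ε⌋).toNat : ℝ) ≤ (n:ℝ) := by linarith
    exact_mod_cast h8
  have F1 := h_r.eventually_ge_atTop 3
  filter_upwards [F1, F2, F3] with n h1 h2 h3
  intro a d hmem ha1 ha2
  have hmem2 := (Finset.mem_filter.mp hmem).2
  obtain ⟨c1, c2, c3, c4⟩ := hmem2
  simp only [add_zero, zero_add] at c1 c3
  exact main_det p hp0 hp1 n _ d h1 h2 c3 h3 a ha1 ha2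

end
end
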